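/- arXiv:1501.02871 — 2 statements merged into one kernel-verified Lean document; each statement's English description precedes it below -/
import Mathlib

section
/- Let A = (a_{ijkl}) be a partially symmetric (2,2)-th order n×n×m×m tensor. Then strong duality holds between the conic programs: inf{ A • Z : Z ∈ B_{n,m}, E • Z = 1 } = sup{ λ ∈ ℝ : A − λE is copositive }, and the supremum on the right is attained. -/
/-! A rank-one tensor `T = (xxᵀ) ⊗ (yyᵀ)` with `x, y ≥ 0` and `E • T > 0` is a positive multiple
of the primal feasible point `T / (E • T)`. Hence `A − λE` is copositive iff `A • Z ≥ λ` at the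
primal feasible rank-one points, and then, the constraint being a half-space, at all primal
feasible points. The dual feasible set is therefore `(-∞, v*]` for the primal value `v*`, which
is finite because `λ = min a_{ijkl}` is dual feasible. -/

open Finset

section ConicDuality

variable {V : Type*} [AddCommGroup V] [Module ℝ V]

def conicPrimalValues (K : Set V) (f g : V →ₗ[ℝ] ℝ) : Set ℝ :=
  {v | ∃ Z ∈ convexHull ℝ K, g Z = 1 ∧ v = f Z}

def conicDualFeasible (K : Set V) (f g : V →ₗ[ℝ] ℝ) : Set ℝ :=
  {lam | ∀ T ∈ K, 0 ≤ f T - lam * g T}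

variable {K : Set V} {f g : V →ₗ[ℝ] ℝ}

theorem le_of_mem_conicDualFeasible_of_mem_conicPrimalValues {lam v : ℝ}
    (hlam : lam ∈ conicDualFeasible K f g) (hv : v ∈ conicPrimalValues K f g) : lam ≤ v := by
  obtain ⟨Z, hZ, hgZ, rfl⟩ := hv
  have hhalf : Convex ℝ {W | 0 ≤ (f - lam • g) W} := convex_halfSpace_ge (f - lam • g).isLinear 0
  have hfZ : 0 ≤ f Z - lam * g Z := by
    simpa using convexHull_min (fun T hT => by simpa using hlam T hT) hhalf hZ
  rw [hgZ] at hfZ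
  linarith

theorem smul_inv_mem_conicPrimalValues (hcone : ∀ T ∈ K, ∀ c : ℝ, 0 < c → c • T ∈ K)
    {T : V} (hT : T ∈ K) (hgT : 0 < g T) : f T / g T ∈ conicPrimalValues K f g :=
  ⟨(g T)⁻¹ • T, subset_convexHull ℝ K (hcone T hT _ (inv_pos.2 hgT)),
    by simp [hgT.ne'], by simp [div_eq_inv_mul]⟩

theorem sInf_mem_conicDualFeasible (hcone : ∀ T ∈ K, ∀ c : ℝ, 0 < c → c • T ∈ K)
    (hg : ∀ T ∈ K, T ≠ 0 → 0 < g T) {lam₀ : ℝ} (hlam₀ : lam₀ ∈ conicDualFeasible K f g) :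
    sInf (conicPrimalValues K f g) ∈ conicDualFeasible K f g := by
  intro T hT
  rcases eq_or_ne T 0 with rfl | hT0
  · simp
  have hgT := hg T hT hT0
  have hbdd : BddBelow (conicPrimalValues K f g) :=
    ⟨lam₀, fun _ hv => le_of_mem_conicDualFeasible_of_mem_conicPrimalValues hlam₀ hv⟩
  have hle := csInf_le hbdd (smul_inv_mem_conicPrimalValues hcone hT hgT)
  rw [le_div_iff₀ hgT] at hle
  linarith

theorem isGreatest_conicDualFeasible_sInf (hcone : ∀ T ∈ K, ∀ c : ℝ, 0 < c → c • T ∈ K)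
    (hg : ∀ T ∈ K, T ≠ 0 → 0 < g T) (hK : ∃ T ∈ K, T ≠ 0)
    (hdual : (conicDualFeasible K f g).Nonempty) :
    IsGreatest (conicDualFeasible K f g) (sInf (conicPrimalValues K f g)) := by
  obtain ⟨lam₀, hlam₀⟩ := hdual
  obtain ⟨T, hT, hT0⟩ := hK
  have hprimal : (conicPrimalValues K f g).Nonempty :=
    ⟨_, smul_inv_mem_conicPrimalValues hcone hT (hg T hT hT0)⟩
  exact ⟨sInf_mem_conicDualFeasible hcone hg hlam₀, fun _ hlam =>
    le_csInf hprimal fun _ hv => le_of_mem_conicDualFeasible_of_mem_conicPrimalValues hlam hv⟩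

end ConicDuality

section BiquadraticTensors

variable {n m : ℕ}

abbrev Tensor22 (n m : ℕ) := Fin n → Fin n → Fin m → Fin m → ℝ

/-- The Frobenius pairing `A • Z`. -/
def tensorPairing (A : Tensor22 n m) : Tensor22 n m →ₗ[ℝ] ℝ where
  toFun Z := ∑ i, ∑ j, ∑ k, ∑ l, A i j k l * Z i j k l
  map_add' Z W := by simp only [Pi.add_apply, mul_add, sum_add_distrib]
  map_smul' c Z := by simp only [Pi.smul_apply, smul_eq_mul, RingHom.id_apply, mul_sum,
    mul_left_comm]

/-- The pairing `E • Z` with the all-ones tensor. -/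
def tensorSum : Tensor22 n m →ₗ[ℝ] ℝ where
  toFun Z := ∑ i, ∑ j, ∑ k, ∑ l, Z i j k l
  map_add' Z W := by simp only [Pi.add_apply, sum_add_distrib]
  map_smul' c Z := by simp only [Pi.smul_apply, smul_eq_mul, RingHom.id_apply, mul_sum]

def rankOne (x : Fin n → ℝ) (y : Fin m → ℝ) : Tensor22 n m :=
  fun i j k l => x i * x j * y k * y l

/-- The rank-one generators of the completely positive cone `B_{n,m}`. -/
def rankOneCone (n m : ℕ) : Set (Tensor22 n m) :=
  {T | ∃ (x : Fin n → ℝ) (y : Fin m → ℝ), (∀ i, 0 ≤ x i) ∧ (∀ k, 0 ≤ y k) ∧ T = rankOne x y}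

theorem tensorSum_rankOne (x : Fin n → ℝ) (y : Fin m → ℝ) :
    tensorSum (rankOne x y) = (∑ i, x i) ^ 2 * (∑ k, y k) ^ 2 := by
  simp only [tensorSum, rankOne, LinearMap.coe_mk, AddHom.coe_mk, ← mul_sum, ← sum_mul]
  ring

theorem tensorPairing_sub_mul_tensorSum (A Z : Tensor22 n m) (c : ℝ) :
    tensorPairing A Z - c * tensorSum Z = ∑ i, ∑ j, ∑ k, ∑ l, (A i j k l - c) * Z i j k l := by
  simp only [tensorPairing, tensorSum, LinearMap.coe_mk, AddHom.coe_mk, sub_mul, mul_sum,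
    sum_sub_distrib]

theorem smul_mem_rankOneCone {T : Tensor22 n m} (hT : T ∈ rankOneCone n m) {c : ℝ} (hc : 0 < c) :
    c • T ∈ rankOneCone n m := by
  obtain ⟨x, y, hx, hy, rfl⟩ := hT
  refine ⟨√c • x, y, fun i => mul_nonneg (Real.sqrt_nonneg c) (hx i), hy, ?_⟩
  ext i j k l
  simp only [rankOne, Pi.smul_apply, smul_eq_mul]
  linear_combination (x i * x j * y k * y l) * (Real.mul_self_sqrt hc.le).symm

theorem tensorSum_pos_of_mem_rankOneCone {T : Tensor22 n m} (hT : T ∈ rankOneCone n m)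
    (hT0 : T ≠ 0) : 0 < tensorSum T := by
  obtain ⟨x, y, hx, hy, rfl⟩ := hT
  have hx0 : x ≠ 0 := by rintro rfl; exact hT0 (by ext; simp [rankOne])
  have hy0 : y ≠ 0 := by rintro rfl; exact hT0 (by ext; simp [rankOne])
  have hxs := Fintype.sum_pos (lt_of_le_of_ne (show 0 ≤ x from hx) hx0.symm)
  have hys := Fintype.sum_pos (lt_of_le_of_ne (show 0 ≤ y from hy) hy0.symm)
  rw [tensorSum_rankOne]
  positivity

theorem exists_ne_zero_mem_rankOneCone (hn : 0 < n) (hm : 0 < m) :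
    ∃ T ∈ rankOneCone n m, T ≠ 0 := by
  refine ⟨rankOne 1 1, ⟨1, 1, fun _ => zero_le_one, fun _ => zero_le_one, rfl⟩, fun h => ?_⟩
  have hsum := tensorSum_rankOne (1 : Fin n → ℝ) (1 : Fin m → ℝ)
  rw [h, map_zero] at hsum
  simp [hn.ne', hm.ne'] at hsum

theorem conicDualFeasible_rankOneCone (A : Tensor22 n m) :
    conicDualFeasible (rankOneCone n m) (tensorPairing A) tensorSum = {lam : ℝ |
      ∀ (x : Fin n → ℝ) (y : Fin m → ℝ), (∀ i, 0 ≤ x i) → (∀ k, 0 ≤ y k) →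
        0 ≤ ∑ i, ∑ j, ∑ k, ∑ l, (A i j k l - lam) * x i * x j * y k * y l} := by
  ext lam
  constructor
  · intro h x y hx hy
    simpa [tensorPairing_sub_mul_tensorSum, rankOne, mul_assoc] using h _ ⟨x, y, hx, hy, rfl⟩
  · rintro h _ ⟨x, y, hx, hy, rfl⟩
    simpa [tensorPairing_sub_mul_tensorSum, rankOne, mul_assoc] using h x y hx hy

theorem nonempty_conicDualFeasible_rankOneCone (A : Tensor22 n m) :
    (conicDualFeasible (rankOneCone n m) (tensorPairing A) tensorSum).Nonempty := by
  obtain ⟨c, hc⟩ := (Set.finite_range fun p : Fin n × Fin n × Fin m × Fin m =>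
    A p.1 p.2.1 p.2.2.1 p.2.2.2).bddBelow
  refine ⟨c, fun T ⟨x, y, hx, hy, hT⟩ => ?_⟩
  rw [tensorPairing_sub_mul_tensorSum, hT]
  refine sum_nonneg fun i _ => sum_nonneg fun j _ => sum_nonneg fun k _ => sum_nonneg fun l _ => ?_
  have hA : c ≤ A i j k l := hc ⟨(i, j, k, l), rfl⟩
  exact mul_nonneg (sub_nonneg.2 hA)
    (mul_nonneg (mul_nonneg (mul_nonneg (hx i) (hx j)) (hy k)) (hy l))

end BiquadraticTensors

theorem conic_strong_duality_general (n m : ℕ) (hn : 0 < n) (hm : 0 < m)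
    (A : Fin n → Fin n → Fin m → Fin m → ℝ) :
    IsGreatest {lam : ℝ | ∀ (x : Fin n → ℝ) (y : Fin m → ℝ),
        (∀ i, 0 ≤ x i) → (∀ k, 0 ≤ y k) →
        0 ≤ ∑ i, ∑ j, ∑ k, ∑ l, (A i j k l - lam) * x i * x j * y k * y l}
      (sInf {v : ℝ | ∃ Z ∈ convexHull ℝ {T : Fin n → Fin n → Fin m → Fin m → ℝ |
          ∃ (x : Fin n → ℝ) (y : Fin m → ℝ), (∀ i, 0 ≤ x i) ∧ (∀ k, 0 ≤ y k) ∧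
            T = fun i j k l => x i * x j * y k * y l},
          (∑ i, ∑ j, ∑ k, ∑ l, Z i j k l) = 1 ∧
          v = ∑ i, ∑ j, ∑ k, ∑ l, A i j k l * Z i j k l}) := by
  have h := isGreatest_conicDualFeasible_sInf (fun _ hT _ hc => smul_mem_rankOneCone hT hc)
    (fun _ => tensorSum_pos_of_mem_rankOneCone) (exists_ne_zero_mem_rankOneCone hn hm)
    (nonempty_conicDualFeasible_rankOneCone A)
  rw [conicDualFeasible_rankOneCone] at h
  exact h

/-- Strong duality between the primal conic program
`inf{ A • Z : Z ∈ B_{n,m}, E • Z = 1 }` and the dual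
`sup{ λ : A − λE copositive }`: the two optimal values coincide and the
supremum in the dual is attained. -/
theorem conic_strong_duality (n m : ℕ) (hn : 0 < n) (hm : 0 < m)
    (A : Fin n → Fin n → Fin m → Fin m → ℝ)
    (hsym : ∀ i j k l, A i j k l = A j i k l ∧ A j i k l = A j i l k) :
    IsGreatest {lam : ℝ | ∀ (x : Fin n → ℝ) (y : Fin m → ℝ),
        (∀ i, 0 ≤ x i) → (∀ k, 0 ≤ y k) →
        0 ≤ ∑ i, ∑ j, ∑ k, ∑ l, (A i j k l - lam) * x i * x j * y k * y l}
      (sInf {v : ℝ | ∃ Z ∈ convexHull ℝ {T : Fin n → Fin n → Fin m → Fin m → ℝ |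
          ∃ (x : Fin n → ℝ) (y : Fin m → ℝ), (∀ i, 0 ≤ x i) ∧ (∀ k, 0 ≤ y k) ∧
            T = fun i j k l => x i * x j * y k * y l},
          (∑ i, ∑ j, ∑ k, ∑ l, Z i j k l) = 1 ∧
          v = ∑ i, ∑ j, ∑ k, ∑ l, A i j k l * Z i j k l}) :=
  conic_strong_duality_general n m hn hm A
end

section
/- Let A = (a_{ijkl}) be a partially symmetric (2,2)-th order n×n×m×m tensor and let s, r be nonnegative integers. Then p_Δ^{(s,r)} − p_A^min ≤ [(s+r+4)/((s+2)(r+2))] (p_A^max − p_A^min), where p_Δ^{(s,r)} = min{ p_A(x,y) : x ∈ Δ_n(s), y ∈ Δ_m(r) }. -/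
/-!
Let `(x, y)` minimize `p_A` on `Δ_n × Δ_m` and draw `k = s + 2` indices independently with law `x`
and `l = r + 2` indices with law `y`. The empirical distributions of the two samples lie on the grid
`Δ_n(s) × Δ_m(r)`, so the grid minimum is at most the expected value of `p_A` at them. The
multinomial second moments `E[ĉᵢ ĉⱼ] = (1 - 1/k) xᵢ xⱼ + δᵢⱼ xᵢ / k` show that this expectation is
`(1 - 1/k)(1 - 1/l) p_A(x, y)` plus a remaining weight `1 - (1 - 1/k)(1 - 1/l)` on averages of
values of `p_A` at points of `Δ_n × Δ_m`, all of which are at most `p_A^max`.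
-/

open Finset

theorem Fin.sum_pi_cons {ι M : Type*} [Fintype ι] [AddCommMonoid M] {k : ℕ}
    (G : (Fin (k + 1) → ι) → M) : ∑ f, G f = ∑ a, ∑ f : Fin k → ι, G (Fin.cons a f) := by
  rw [← (Fin.consEquiv fun _ => ι).sum_comp, Fintype.sum_prod_type]
  rfl

def quadForm {ι : Type*} [Fintype ι] (B : ι → ι → ℝ) (z : ι → ℝ) : ℝ :=
  ∑ i, ∑ j, B i j * z i * z j

theorem quadForm_single {ι : Type*} [Fintype ι] [DecidableEq ι] (B : ι → ι → ℝ) (i : ι) :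
    quadForm B (Pi.single i 1) = B i i := by
  simp [quadForm, Pi.single_apply]

namespace Multinomial

section Empirical

variable {ι : Type*} [DecidableEq ι] {k : ℕ}

noncomputable def empirical (f : Fin k → ι) : ι → ℝ := fun i => #{t | f t = i} / k

theorem natCast_mul_empirical (hk : k ≠ 0) (f : Fin k → ι) (i : ι) :
    (k : ℝ) * empirical f i = #{t | f t = i} :=
  mul_div_cancel₀ _ (Nat.cast_ne_zero.2 hk)

theorem card_filter_cons (a : ι) (f : Fin k → ι) (i : ι) :
    (#{t | (Fin.cons a f : Fin (k + 1) → ι) t = i} : ℝ) =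
      (if a = i then 1 else 0) + #{t | f t = i} := by
  simp only [natCast_card_filter, Fin.sum_univ_succ, Fin.cons_zero, Fin.cons_succ]

end Empirical

variable {ι : Type*} [Fintype ι] {k : ℕ} {x : ι → ℝ}

theorem sum_prod_eq_one (hx : ∑ i, x i = 1) : ∑ f : Fin k → ι, ∏ t, x (f t) = 1 := by
  rw [← Fintype.sum_pow, hx, one_pow]

variable [DecidableEq ι]

theorem empirical_mem_stdSimplex (hk : 0 < k) (f : Fin k → ι) :
    empirical f ∈ stdSimplex ℝ ι := by
  refine ⟨fun i => by unfold empirical; positivity, ?_⟩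
  simp only [empirical]
  rw [← sum_div, ← Nat.cast_sum, sum_card_fiberwise_eq_card_filter]
  simp [hk.ne']

theorem sum_prod_mul_card_filter (hx : ∑ i, x i = 1) (i : ι) :
    ∑ f : Fin k → ι, (∏ t, x (f t)) * #{t | f t = i} = k * x i := by
  induction k with
  | zero => simp
  | succ k ih =>
    rw [Fin.sum_pi_cons]
    simp only [card_filter_cons, Fin.prod_univ_succ, Fin.cons_zero, Fin.cons_succ]
    have expand : ∀ (a : ι) (f : Fin k → ι), x a * (∏ t, x (f t)) *
        ((if a = i then 1 else 0) + #{t | f t = i}) =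
        x a * (if a = i then 1 else 0) * ∏ t, x (f t) + x a * ((∏ t, x (f t)) * #{t | f t = i}) :=
      fun a f => by ring
    simp only [expand, sum_add_distrib, ← mul_sum, ih, sum_prod_eq_one hx, mul_one, mul_ite,
      mul_zero, sum_ite_eq', mem_univ, if_true, ← sum_mul, hx]
    push_cast
    ring

theorem sum_prod_mul_card_filter_mul_card_filter (hx : ∑ i, x i = 1) (i j : ι) :
    ∑ f : Fin k → ι, (∏ t, x (f t)) * #{t | f t = i} * #{t | f t = j} =
      k * (k - 1) * (x i * x j) + if i = j then k * x i else 0 := by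
  induction k with
  | zero => simp
  | succ k ih =>
    rw [Fin.sum_pi_cons]
    simp only [card_filter_cons, Fin.prod_univ_succ, Fin.cons_zero, Fin.cons_succ]
    have expand : ∀ (a : ι) (f : Fin k → ι), x a * (∏ t, x (f t)) *
        ((if a = i then 1 else 0) + #{t | f t = i}) * ((if a = j then 1 else 0) + #{t | f t = j}) =
        x a * (if a = i then 1 else 0) * (if a = j then 1 else 0) * ∏ t, x (f t) +
        x a * (if a = i then 1 else 0) * ((∏ t, x (f t)) * #{t | f t = j}) +
        x a * (if a = j then 1 else 0) * ((∏ t, x (f t)) * #{t | f t = i}) +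
        x a * ((∏ t, x (f t)) * #{t | f t = i} * #{t | f t = j}) := fun a f => by ring
    simp only [expand, sum_add_distrib, ← mul_sum, ih, sum_prod_mul_card_filter hx,
      sum_prod_eq_one hx]
    simp only [mul_one, mul_ite, mul_zero, ite_mul, zero_mul, sum_ite_eq', mem_univ, if_true]
    rw [← sum_mul, hx]
    rcases eq_or_ne i j with rfl | hij
    · simp only [if_true]
      push_cast
      ring
    · simp only [hij, hij.symm, if_false]
      push_cast
      ring

/-- The expectation of `F` at the empirical distribution of `k` independent samples of law `x`. -/
noncomputable def multinomialMean (k : ℕ) (x : ι → ℝ) (F : (ι → ℝ) → ℝ) : ℝ :=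
  ∑ f : Fin k → ι, (∏ t, x (f t)) * F (empirical f)

theorem multinomialMean_const (hx : ∑ i, x i = 1) (c : ℝ) :
    multinomialMean k x (fun _ => c) = c := by
  rw [multinomialMean, ← sum_mul, sum_prod_eq_one hx, one_mul]

theorem multinomialMean_affine (hx : ∑ i, x i = 1) (a b : ℝ) (F : (ι → ℝ) → ℝ) :
    multinomialMean k x (fun z => a * F z + b) = a * multinomialMean k x F + b := by
  simp only [multinomialMean, mul_add, sum_add_distrib, ← sum_mul, sum_prod_eq_one hx, mul_sum,
    one_mul, mul_left_comm]

theorem multinomialMean_mono (hx : ∀ i, 0 ≤ x i) {F G : (ι → ℝ) → ℝ}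
    (h : ∀ f : Fin k → ι, F (empirical f) ≤ G (empirical f)) :
    multinomialMean k x F ≤ multinomialMean k x G :=
  sum_le_sum fun f _ => mul_le_mul_of_nonneg_left (h f) (prod_nonneg fun _ _ => hx _)

theorem le_multinomialMean (hx : x ∈ stdSimplex ℝ ι) {c : ℝ} {F : (ι → ℝ) → ℝ}
    (h : ∀ f : Fin k → ι, c ≤ F (empirical f)) : c ≤ multinomialMean k x F :=
  multinomialMean_const hx.2 c (k := k) ▸ multinomialMean_mono hx.1 h

theorem multinomialMean_quadForm (hx : ∑ i, x i = 1) (hk : k ≠ 0) (B : ι → ι → ℝ) :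
    multinomialMean k x (quadForm B) =
      (1 - 1 / k) * quadForm B x + 1 / k * ∑ i, B i i * x i := by
  have hk' : (k : ℝ) ≠ 0 := Nat.cast_ne_zero.2 hk
  calc multinomialMean k x (quadForm B)
      = ∑ i, ∑ j, B i j / k ^ 2 *
          ∑ f : Fin k → ι, (∏ t, x (f t)) * #{t | f t = i} * #{t | f t = j} := by
        simp only [multinomialMean, quadForm, empirical, mul_sum]
        rw [sum_comm]
        refine sum_congr rfl fun i _ => ?_
        rw [sum_comm]
        refine sum_congr rfl fun j _ => sum_congr rfl fun f _ => ?_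
        field_simp
    _ = _ := by
        simp only [sum_prod_mul_card_filter_mul_card_filter hx, mul_add, mul_ite, mul_zero,
          sum_add_distrib, sum_ite_eq, mem_univ, if_true, quadForm, mul_sum]
        congr 1 <;> refine sum_congr rfl fun i _ => ?_
        · exact sum_congr rfl fun j _ => by field_simp
        · field_simp

theorem multinomialMean_quadForm_le (hx : x ∈ stdSimplex ℝ ι) (hk : 0 < k) {B : ι → ι → ℝ}
    {M : ℝ} (hB : ∀ i, B i i ≤ M) :
    multinomialMean k x (quadForm B) ≤ (1 - 1 / k) * quadForm B x + 1 / k * M := by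
  rw [multinomialMean_quadForm hx.2 hk.ne']
  gcongr
  calc ∑ i, B i i * x i ≤ ∑ i, M * x i :=
        sum_le_sum fun i _ => mul_le_mul_of_nonneg_right (hB i) (hx.1 i)
    _ = M := by rw [← mul_sum, hx.2, mul_one]

end Multinomial

section BiquadForm

open Multinomial

variable {ι κ : Type*} [Fintype ι] [Fintype κ]

def biquadForm (A : ι → ι → κ → κ → ℝ) (x : ι → ℝ) (y : κ → ℝ) : ℝ :=
  ∑ i, ∑ j, ∑ k, ∑ l, A i j k l * x i * x j * y k * y l

variable (A : ι → ι → κ → κ → ℝ)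

theorem biquadForm_eq_quadForm_left (x : ι → ℝ) (y : κ → ℝ) :
    biquadForm A x y = quadForm (fun i j => ∑ k, ∑ l, A i j k l * y k * y l) x := by
  simp only [biquadForm, quadForm, sum_mul]
  exact sum_congr rfl fun i _ => sum_congr rfl fun j _ => sum_congr rfl fun k _ =>
    sum_congr rfl fun l _ => by ring

theorem biquadForm_eq_quadForm_right (x : ι → ℝ) (y : κ → ℝ) :
    biquadForm A x y = quadForm (fun k l => ∑ i, ∑ j, A i j k l * x i * x j) y := by
  simp only [biquadForm, quadForm, sum_mul]
  rw [sum_comm_cycle]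
  refine sum_congr rfl fun k _ => ?_
  rw [sum_comm_cycle]

theorem continuous_biquadForm :
    Continuous fun z : (ι → ℝ) × (κ → ℝ) => biquadForm A z.1 z.2 := by
  unfold biquadForm
  fun_prop

theorem isCompact_biquadForm_values :
    IsCompact {v : ℝ | ∃ x ∈ stdSimplex ℝ ι, ∃ y ∈ stdSimplex ℝ κ, v = biquadForm A x y} := by
  convert ((isCompact_stdSimplex ℝ ι).prod (isCompact_stdSimplex ℝ κ)).image
    (continuous_biquadForm A) using 1
  ext v
  simp [eq_comm]

theorem multinomialMean_biquadForm_le [DecidableEq ι] [DecidableEq κ] {x : ι → ℝ} {y : κ → ℝ}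
    (hx : x ∈ stdSimplex ℝ ι) (hy : y ∈ stdSimplex ℝ κ) {k l : ℕ} (hk : 0 < k) (hl : 0 < l)
    {M : ℝ} (hM : ∀ x ∈ stdSimplex ℝ ι, ∀ y ∈ stdSimplex ℝ κ, biquadForm A x y ≤ M) :
    multinomialMean k x (fun x' => multinomialMean l y (biquadForm A x')) ≤
      (1 - 1 / k) * (1 - 1 / l) * biquadForm A x y + (1 - (1 - 1 / k) * (1 - 1 / l)) * M := by
  have hdiag_left (y' : κ → ℝ) (hy' : y' ∈ stdSimplex ℝ κ) (i : ι) :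
      ∑ k, ∑ l, A i i k l * y' k * y' l ≤ M := by
    simpa [biquadForm_eq_quadForm_left, quadForm_single] using
      hM _ (single_mem_stdSimplex ℝ i) y' hy'
  have hdiag_right (x' : ι → ℝ) (hx' : x' ∈ stdSimplex ℝ ι) (k : κ) :
      ∑ i, ∑ j, A i j k k * x' i * x' j ≤ M := by
    simpa [biquadForm_eq_quadForm_right, quadForm_single] using
      hM x' hx' _ (single_mem_stdSimplex ℝ k)
  calc multinomialMean k x (fun x' => multinomialMean l y (biquadForm A x'))
      ≤ multinomialMean k x (fun x' => (1 - 1 / l) * biquadForm A x' y + 1 / l * M) :=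
        multinomialMean_mono hx.1 fun f => by
          rw [show biquadForm A (empirical f) = _ from funext (biquadForm_eq_quadForm_right A _)]
          apply multinomialMean_quadForm_le hy hl
          exact hdiag_right _ (empirical_mem_stdSimplex hk f)
    _ = (1 - 1 / l) * multinomialMean k x (fun x' => biquadForm A x' y) + 1 / l * M :=
        multinomialMean_affine hx.2 _ _ _
    _ ≤ (1 - 1 / l) * ((1 - 1 / k) * biquadForm A x y + 1 / k * M) + 1 / l * M := by
        gcongr
        · exact sub_nonneg.2 (div_le_one_of_le₀ (Nat.one_le_cast.2 hl) (Nat.cast_nonneg l))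
        · simp only [biquadForm_eq_quadForm_left A _ y]
          apply multinomialMean_quadForm_le hx hk
          exact hdiag_left y hy
    _ = _ := by ring

end BiquadForm

open Multinomial in
theorem grid_min_sub_pmin_bound_general (n m : ℕ) (hn : 0 < n) (hm : 0 < m) (s r : ℕ)
    (A : Fin n → Fin n → Fin m → Fin m → ℝ) :
    sInf {v : ℝ | ∃ x ∈ stdSimplex ℝ (Fin n), ∃ y ∈ stdSimplex ℝ (Fin m),
        (∀ i, ∃ t : ℕ, ((s : ℝ) + 2) * x i = t) ∧
        (∀ k, ∃ t : ℕ, ((r : ℝ) + 2) * y k = t) ∧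
        v = ∑ i, ∑ j, ∑ k, ∑ l, A i j k l * x i * x j * y k * y l} -
      sInf {v : ℝ | ∃ x ∈ stdSimplex ℝ (Fin n), ∃ y ∈ stdSimplex ℝ (Fin m),
        v = ∑ i, ∑ j, ∑ k, ∑ l, A i j k l * x i * x j * y k * y l} ≤
    (((s : ℝ) + (r : ℝ) + 4) / (((s : ℝ) + 2) * ((r : ℝ) + 2))) *
      (sSup {v : ℝ | ∃ x ∈ stdSimplex ℝ (Fin n), ∃ y ∈ stdSimplex ℝ (Fin m),
          v = ∑ i, ∑ j, ∑ k, ∑ l, A i j k l * x i * x j * y k * y l} -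
        sInf {v : ℝ | ∃ x ∈ stdSimplex ℝ (Fin n), ∃ y ∈ stdSimplex ℝ (Fin m),
          v = ∑ i, ∑ j, ∑ k, ∑ l, A i j k l * x i * x j * y k * y l}) := by
  simp only [← biquadForm.eq_1]
  set S := {v : ℝ | ∃ x ∈ stdSimplex ℝ (Fin n), ∃ y ∈ stdSimplex ℝ (Fin m), v = biquadForm A x y}
  set G := {v : ℝ | ∃ x ∈ stdSimplex ℝ (Fin n), ∃ y ∈ stdSimplex ℝ (Fin m),
    (∀ i, ∃ t : ℕ, ((s : ℝ) + 2) * x i = t) ∧ (∀ k, ∃ t : ℕ, ((r : ℝ) + 2) * y k = t) ∧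
    v = biquadForm A x y}
  have hS : IsCompact S := isCompact_biquadForm_values A
  have hSne : S.Nonempty :=
    ⟨_, _, single_mem_stdSimplex ℝ ⟨0, hn⟩, _, single_mem_stdSimplex ℝ ⟨0, hm⟩, rfl⟩
  obtain ⟨x, hx, y, hy, hxy⟩ := hS.sInf_mem hSne
  have hmax : ∀ x ∈ stdSimplex ℝ (Fin n), ∀ y ∈ stdSimplex ℝ (Fin m), biquadForm A x y ≤ sSup S :=
    fun x hx y hy => le_csSup hS.bddAbove ⟨x, hx, y, hy, rfl⟩
  have hGS : G ⊆ S := fun v ⟨x, hx, y, hy, _, _, hv⟩ => ⟨x, hx, y, hy, hv⟩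
  have hgrid (f : Fin (s + 2) → Fin n) (g : Fin (r + 2) → Fin m) :
      sInf G ≤ biquadForm A (empirical f) (empirical g) :=
    csInf_le (hS.bddBelow.mono hGS) ⟨empirical f, empirical_mem_stdSimplex (by omega) f,
      empirical g, empirical_mem_stdSimplex (by omega) g,
      fun i => ⟨_, by rw [← natCast_mul_empirical (by omega) f i]; push_cast; rfl⟩,
      fun k => ⟨_, by rw [← natCast_mul_empirical (by omega) g k]; push_cast; rfl⟩, rfl⟩
  have hlow := le_multinomialMean (F := fun x' => multinomialMean (r + 2) y (biquadForm A x')) hx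
    fun f => le_multinomialMean hy fun g => hgrid f g
  have hmean := multinomialMean_biquadForm_le A hx hy (by omega : 0 < s + 2)
    (by omega : 0 < r + 2) hmax
  have hle : sInf S ≤ sSup S := csInf_le_csSup hSne hS.bddBelow hS.bddAbove
  rw [← hxy] at hmean
  push_cast at hmean
  have hcoef : ((s : ℝ) + r + 4) / ((s + 2) * (r + 2)) =
      (1 - (1 - 1 / (s + 2)) * (1 - 1 / (r + 2))) + 1 / (s + 2) * (1 / (r + 2)) := by
    field_simp
    ring
  rw [hcoef]
  nlinarith [mul_nonneg (by positivity : (0 : ℝ) ≤ 1 / (s + 2) * (1 / (r + 2))) (sub_nonneg.2 hle)]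

/-- **second half of Theorem 5.** The approximation quality bound
`p_Δ^{(s,r)} − p_A^min ≤ (s+r+4)/((s+2)(r+2)) · (p_A^max − p_A^min)`, where
`p_Δ^{(s,r)}` is the minimum of `p_A` over the rational grid `Δ_n(s) × Δ_m(r)`. -/
theorem grid_min_sub_pmin_bound (n m : ℕ) (hn : 0 < n) (hm : 0 < m) (s r : ℕ)
    (A : Fin n → Fin n → Fin m → Fin m → ℝ)
    (hsym : ∀ i j k l, A i j k l = A j i k l ∧ A j i k l = A j i l k) :
    sInf {v : ℝ | ∃ x ∈ stdSimplex ℝ (Fin n), ∃ y ∈ stdSimplex ℝ (Fin m),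
        (∀ i, ∃ t : ℕ, ((s : ℝ) + 2) * x i = t) ∧
        (∀ k, ∃ t : ℕ, ((r : ℝ) + 2) * y k = t) ∧
        v = ∑ i, ∑ j, ∑ k, ∑ l, A i j k l * x i * x j * y k * y l} -
      sInf {v : ℝ | ∃ x ∈ stdSimplex ℝ (Fin n), ∃ y ∈ stdSimplex ℝ (Fin m),
        v = ∑ i, ∑ j, ∑ k, ∑ l, A i j k l * x i * x j * y k * y l} ≤
    (((s : ℝ) + (r : ℝ) + 4) / (((s : ℝ) + 2) * ((r : ℝ) + 2))) *
      (sSup {v : ℝ | ∃ x ∈ stdSimplex ℝ (Fin n), ∃ y ∈ stdSimplex ℝ (Fin m),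
          v = ∑ i, ∑ j, ∑ k, ∑ l, A i j k l * x i * x j * y k * y l} -
        sInf {v : ℝ | ∃ x ∈ stdSimplex ℝ (Fin n), ∃ y ∈ stdSimplex ℝ (Fin m),
          v = ∑ i, ∑ j, ∑ k, ∑ l, A i j k l * x i * x j * y k * y l}) :=
  grid_min_sub_pmin_bound_general n m hn hm s r A
end
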